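/- arXiv:2202.07649 — 3 statements merged into one kernel-verified Lean document; each statement's English description precedes it below -/
import Mathlib

section
/- Let N ≥ 1 be an integer, suppose ζ² is a primitive N-th root of unity, set E⁰ := { e ∈ E : (e, f) ≡ 0 (mod N) for all f ∈ E }, and let S ⊂ E be a complete set of representatives of the cosets of E⁰ in E. Then { Z_s : s ∈ S } is a basis of the quantum torus T_ζ(E) as a module over its center; in particular, T_ζ(E) is a free module over its center of rank equal to the index [E : E⁰]. -/
/-! Since `Z_f Z_e = ζ^{2(f,e)} Z_e Z_f`, an element commutes with `Z_f` exactly when every `e`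
in its support has `ζ^{2(e,f)} = 1`, i.e. `N ∣ (e,f)`; so the centre consists of the elements
supported on `E⁰`. Multiplying a central element by `Z_s` moves its support into the coset
`s + E⁰`, whence the `Z_s` for representatives of distinct cosets are independent over the centre;
and each `Z_e` is a central multiple of `Z_s` for the representative `s` of `e + E⁰`, whence they
span. Finally `E/E⁰` is finitely generated and killed by `N`, hence finite. -/

/-- The kernel sublattice `E⁰ = {e ∈ E | ω(e,f) ≡ 0 (mod N) for all f ∈ E}`. -/
def kernelLattice {E : Type*} [AddCommGroup E]
    (ω : E →ₗ[ℤ] E →ₗ[ℤ] ℤ) (N : ℕ) : AddSubgroup E where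
  carrier := {e : E | ∀ f : E, (N : ℤ) ∣ ω e f}
  zero_mem' := by intro f; simp
  add_mem' := by
    intro a b ha hb f
    rw [map_add, LinearMap.add_apply]
    exact dvd_add (ha f) (hb f)
  neg_mem' := by
    intro a ha f
    rw [map_neg, LinearMap.neg_apply]
    exact (ha f).neg_right

theorem mem_kernelLattice {E : Type*} [AddCommGroup E] {ω : E →ₗ[ℤ] E →ₗ[ℤ] ℤ} {N : ℕ} {e : E} :
    e ∈ kernelLattice ω N ↔ ∀ f, (N : ℤ) ∣ ω e f :=
  Iff.rfl

theorem IsPrimitiveRoot.zpow_eq_zpow_neg_iff_dvd {G : Type*} [CommGroupWithZero G] {ζ : G}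
    {N : ℕ} (hζ : ζ ≠ 0) (h : IsPrimitiveRoot (ζ ^ 2) N) (m : ℤ) :
    ζ ^ m = ζ ^ (-m) ↔ (N : ℤ) ∣ m := by
  rw [← h.zpow_eq_one_iff_dvd, zpow_neg, ← mul_eq_one_iff_eq_inv₀ (zpow_ne_zero m hζ), ← mul_zpow,
    ← sq]

theorem finite_quotient_kernelLattice {E : Type*} [AddCommGroup E] [Module.Finite ℤ E]
    (ω : E →ₗ[ℤ] E →ₗ[ℤ] ℤ) {N : ℕ} (hN : N ≠ 0) : Finite (E ⧸ kernelLattice ω N) := by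
  have : AddGroup.FG E := Module.Finite.iff_addGroup_fg.mp inferInstance
  refine AddCommGroup.finite_of_fg_isAddTorsion _ fun q => ?_
  induction q using QuotientAddGroup.induction_on with | H e => ?_
  refine isOfFinAddOrder_iff_nsmul_eq_zero.mpr ⟨N, Nat.pos_of_ne_zero hN, ?_⟩
  rw [← QuotientAddGroup.mk_nsmul, QuotientAddGroup.eq_zero_iff, mem_kernelLattice]
  simp

theorem AddSubgroup.bijective_mk_of_existsUnique {E : Type*} [AddCommGroup E] {H : AddSubgroup E}
    {S : Set E} (hS : ∀ e : E, ∃! s : E, s ∈ S ∧ e - s ∈ H) :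
    Function.Bijective (fun s : S => (s : E ⧸ H)) := by
  constructor
  · rintro ⟨s₁, h₁⟩ ⟨s₂, h₂⟩ h
    have hd : s₁ - s₂ ∈ H := by
      rw [QuotientAddGroup.eq, ← neg_mem_iff] at h
      simpa [sub_eq_neg_add] using h
    exact Subtype.ext ((hS s₁).unique ⟨h₁, by simp⟩ ⟨h₂, hd⟩)
  · intro q
    induction q using QuotientAddGroup.induction_on with | H e => ?_
    obtain ⟨s, ⟨hs, he⟩, -⟩ := hS e
    exact ⟨⟨s, hs⟩, QuotientAddGroup.eq.mpr (by simpa [sub_eq_neg_add] using he)⟩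

theorem Module.Basis.mem_center_iff_forall_commute {ι K A : Type*} [CommSemiring K] [Semiring A]
    [Algebra K A] (b : Module.Basis ι K A) {x : A} :
    x ∈ Subalgebra.center K A ↔ ∀ i, Commute (b i) x := by
  refine ⟨fun h i => Subalgebra.mem_center_iff.mp h (b i), fun h => ?_⟩
  have : LinearMap.mulRight K x = LinearMap.mulLeft K x := b.ext h
  exact Subalgebra.mem_center_iff.mpr fun y => DFunLike.congr_fun this y

section QuantumTorus

variable {K E A : Type*} [Field K] [AddCommGroup E] [Ring A] [Algebra K A]

def IsQuantumTorusBasis (ζ : K) (ω : E →ₗ[ℤ] E →ₗ[ℤ] ℤ) (Z : Module.Basis E K A) : Prop :=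
  ∀ a b : E, Z a * Z b = ζ ^ ω a b • Z (a + b)

namespace IsQuantumTorusBasis

variable {ζ : K} {ω : E →ₗ[ℤ] E →ₗ[ℤ] ℤ} {Z : Module.Basis E K A}

theorem repr_mul_basis (hZ : IsQuantumTorusBasis ζ ω Z) (x : A) (e f : E) :
    Z.repr (x * Z f) (e + f) = ζ ^ ω e f * Z.repr x e := by
  have h : (Z.coord (e + f)).comp (LinearMap.mulRight K (Z f)) = ζ ^ ω e f • Z.coord e := by
    refine Z.ext fun a => ?_
    by_cases hae : a = e
    · subst hae; simp [hZ a f]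
    · simp [hZ a f, hae]
  simpa using DFunLike.congr_fun h x

theorem repr_basis_mul (hZ : IsQuantumTorusBasis ζ ω Z) (x : A) (e f : E) :
    Z.repr (Z f * x) (e + f) = ζ ^ ω f e * Z.repr x e := by
  have h : (Z.coord (e + f)).comp (LinearMap.mulLeft K (Z f)) = ζ ^ ω f e • Z.coord e := by
    refine Z.ext fun a => ?_
    by_cases hae : a = e
    · subst hae; simp [hZ f a, add_comm]
    · simp [hZ f a, hae, add_comm f]
  simpa using DFunLike.congr_fun h x

section RootOfUnity

variable {N : ℕ}

theorem commute_basis_iff (hZ : IsQuantumTorusBasis ζ ω Z) (hskew : ∀ a b : E, ω a b = - ω b a)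
    (hζ : ζ ≠ 0) (hprim : IsPrimitiveRoot (ζ ^ 2) N) (x : A) (f : E) :
    Commute (Z f) x ↔ ∀ e, Z.repr x e ≠ 0 → (N : ℤ) ∣ ω e f := by
  rw [Commute, SemiconjBy, ← Z.repr.injective.eq_iff, Finsupp.ext_iff,
    (Equiv.addRight f).symm.forall_congr_left]
  refine forall_congr' fun e => ?_
  simp only [Equiv.symm_symm, Equiv.coe_addRight, hZ.repr_mul_basis, hZ.repr_basis_mul, hskew f e,
    ← hprim.zpow_eq_zpow_neg_iff_dvd hζ, eq_comm (a := ζ ^ ω e f)]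
  by_cases hx : Z.repr x e = 0 <;> simp [hx]

theorem mem_center_iff (hZ : IsQuantumTorusBasis ζ ω Z) (hskew : ∀ a b : E, ω a b = - ω b a)
    (hζ : ζ ≠ 0) (hprim : IsPrimitiveRoot (ζ ^ 2) N) (x : A) :
    x ∈ Subalgebra.center K A ↔ ∀ e, Z.repr x e ≠ 0 → e ∈ kernelLattice ω N := by
  simp only [Z.mem_center_iff_forall_commute, hZ.commute_basis_iff hskew hζ hprim,
    mem_kernelLattice]
  exact ⟨fun h e he f => h f e he, fun h f e he => h e he f⟩

theorem basis_mem_center (hZ : IsQuantumTorusBasis ζ ω Z) (hskew : ∀ a b : E, ω a b = - ω b a)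
    (hζ : ζ ≠ 0) (hprim : IsPrimitiveRoot (ζ ^ 2) N) {e : E} (he : e ∈ kernelLattice ω N) :
    Z e ∈ Subalgebra.center K A := by
  refine (hZ.mem_center_iff hskew hζ hprim _).mpr fun g hg => ?_
  rw [Z.repr_self, Finsupp.single_apply_ne_zero] at hg
  exact hg.1 ▸ he

end RootOfUnity

variable {H : AddSubgroup E} {ι : Type*} {s : ι → E}

theorem repr_mul_basis_eq_zero (hZ : IsQuantumTorusBasis ζ ω Z)
    (hsupp : ∀ c ∈ Subalgebra.center K A, ∀ e, Z.repr c e ≠ 0 → e ∈ H)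
    {c : A} (hc : c ∈ Subalgebra.center K A) {f g : E} (hfg : g - f ∉ H) :
    Z.repr (c * Z f) g = 0 := by
  rw [← sub_add_cancel g f, hZ.repr_mul_basis, not_imp_comm.mp (hsupp c hc _) hfg, mul_zero]

theorem linearIndependent_center (hZ : IsQuantumTorusBasis ζ ω Z) (hζ : ζ ≠ 0)
    (hsupp : ∀ c ∈ Subalgebra.center K A, ∀ e, Z.repr c e ≠ 0 → e ∈ H)
    (hs : Function.Injective fun i => (s i : E ⧸ H)) :
    LinearIndependent (Subalgebra.center K A) fun i => Z (s i) := by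
  rw [linearIndependent_iff]
  intro l hl
  ext i₀
  suffices hrepr : ∀ g, Z.repr (l i₀ : A) g = 0 by
    have : (l i₀ : A) = 0 := Z.repr.injective (by ext g; simpa using hrepr g)
    simpa using this
  intro g
  by_cases hg : g ∈ H
  swap
  · exact not_imp_comm.mp (hsupp _ (l i₀).2 g) hg
  have hcoeff := congr_arg (fun x => Z.repr x (g + s i₀)) hl
  simp only [Finsupp.linearCombination_apply, Finsupp.sum, map_sum, Finsupp.finsetSum_apply,
    Subalgebra.smul_def, smul_eq_mul, map_zero, Finsupp.coe_zero, Pi.zero_apply] at hcoeff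
  have hother : ∀ i ≠ i₀, Z.repr (l i * Z (s i)) (g + s i₀) = 0 := by
    refine fun i hi => hZ.repr_mul_basis_eq_zero hsupp (l i).2 fun hmem => hi (hs ?_)
    rw [QuotientAddGroup.eq]
    convert sub_mem hmem hg using 1
    abel
  rw [Finset.sum_eq_single i₀ (fun i _ hi => hother i hi)
    (fun h => by simp [Finsupp.notMem_support_iff.mp h]), hZ.repr_mul_basis] at hcoeff
  exact (mul_eq_zero.mp hcoeff).resolve_left (zpow_ne_zero _ hζ)

theorem span_center_eq_top (hZ : IsQuantumTorusBasis ζ ω Z) (hζ : ζ ≠ 0)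
    (hH : ∀ e ∈ H, Z e ∈ Subalgebra.center K A)
    (hs : Function.Surjective fun i => (s i : E ⧸ H)) :
    Submodule.span (Subalgebra.center K A) (Set.range fun i => Z (s i)) = ⊤ := by
  set C := Subalgebra.center K A
  have hZ_mem : ∀ e, Z e ∈ Submodule.span C (Set.range fun i => Z (s i)) := by
    intro e
    obtain ⟨i, hi⟩ := hs e
    have he : e - s i ∈ H := by simpa [QuotientAddGroup.eq, sub_eq_neg_add] using hi
    have hc : ζ ^ (-ω (e - s i) (s i)) • Z (e - s i) ∈ C := C.smul_mem (hH _ he) _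
    have : (⟨_, hc⟩ : C) • Z (s i) = Z e := by
      rw [Subalgebra.smul_def, smul_eq_mul]
      change (ζ ^ _ • Z (e - s i)) * Z (s i) = Z e
      rw [smul_mul_assoc, hZ, smul_smul, ← zpow_add₀ hζ, neg_add_cancel,
        zpow_zero, one_smul, sub_add_cancel]
    rw [← this]
    exact Submodule.smul_mem _ _ (Submodule.subset_span ⟨i, rfl⟩)
  rw [← Submodule.restrictScalars_eq_top_iff K, eq_top_iff, ← Z.span_eq]
  exact Submodule.span_le.mpr (Set.range_subset_iff.mpr hZ_mem)

end IsQuantumTorusBasis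

end QuantumTorus

theorem stmt7_general {E : Type*} [AddCommGroup E] [Module.Finite ℤ E]
    (ω : E →ₗ[ℤ] E →ₗ[ℤ] ℤ) (hskew : ∀ a b : E, ω a b = - ω b a)
    {A : Type*} [Ring A] [Algebra ℂ A]
    (ζ : ℂ) (hζ : ζ ≠ 0) (Z : Module.Basis E ℂ A)
    (hmul : ∀ a b : E, Z a * Z b = ζ ^ (ω a b) • Z (a + b))
    (N : ℕ) (hN : 1 ≤ N) (hprim : IsPrimitiveRoot (ζ ^ 2) N)
    (S : Set E)
    (hS : ∀ e : E, ∃! s : E, s ∈ S ∧ e - s ∈ kernelLattice ω N) :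
    (∃ B : Module.Basis S (Subalgebra.center ℂ A) A, ∀ s : S, B s = Z (s : E)) ∧
    Module.Free (Subalgebra.center ℂ A) A ∧
    Module.rank (Subalgebra.center ℂ A) A =
      (Nat.card (E ⧸ kernelLattice ω N) : Cardinal) := by
  have hZ : IsQuantumTorusBasis ζ ω Z := hmul
  have hbij := AddSubgroup.bijective_mk_of_existsUnique hS
  have hli := hZ.linearIndependent_center hζ
    (fun c hc => (hZ.mem_center_iff hskew hζ hprim c).mp hc) hbij.injective
  have hspan := hZ.span_center_eq_top hζ
    (fun e he => hZ.basis_mem_center hskew hζ hprim he) hbij.surjective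
  let B := Module.Basis.mk hli hspan.ge
  have := finite_quotient_kernelLattice ω (Nat.one_le_iff_ne_zero.mp hN)
  have : Finite S := Finite.of_injective _ hbij.injective
  have : Fintype S := Fintype.ofFinite S
  have : Nontrivial A := ⟨Z 0, 0, Z.ne_zero 0⟩
  refine ⟨⟨B, Module.Basis.mk_apply hli hspan.ge⟩, Module.Free.of_basis B, ?_⟩
  rw [rank_eq_card_basis B, Fintype.card_eq_nat_card, Nat.card_eq_of_bijective _ hbij]

/-- with `E` a free `ℤ`-module of finite rank with skew-symmetric form `ω`,
and `T_ζ(E)` the quantum torus (`ℂ`-algebra `A` with basis `(Z_e)`, `Z_0 = 1`,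
`Z_a · Z_b = ζ^{ω(a,b)} Z_{a+b}`): if `ζ²` is a primitive `N`-th root of unity and `S`
is a complete set of representatives of the cosets of `E⁰` in `E`, then `{Z_s : s ∈ S}`
is a basis of `T_ζ(E)` over its center; in particular `T_ζ(E)` is free over its center
of rank the index `[E : E⁰]`. -/
theorem stmt7 {E : Type*} [AddCommGroup E] [Module.Free ℤ E] [Module.Finite ℤ E]
    (ω : E →ₗ[ℤ] E →ₗ[ℤ] ℤ) (hskew : ∀ a b : E, ω a b = - ω b a)
    {A : Type*} [Ring A] [Algebra ℂ A]
    (ζ : ℂ) (hζ : ζ ≠ 0) (Z : Module.Basis E ℂ A) (hone : Z 0 = 1)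
    (hmul : ∀ a b : E, Z a * Z b = ζ ^ (ω a b) • Z (a + b))
    (N : ℕ) (hN : 1 ≤ N) (hprim : IsPrimitiveRoot (ζ ^ 2) N)
    (S : Set E)
    (hS : ∀ e : E, ∃! s : E, s ∈ S ∧ e - s ∈ kernelLattice ω N) :
    (∃ B : Module.Basis S (Subalgebra.center ℂ A) A, ∀ s : S, B s = Z (s : E)) ∧
    Module.Free (Subalgebra.center ℂ A) A ∧
    Module.rank (Subalgebra.center ℂ A) A =
      (Nat.card (E ⧸ kernelLattice ω N) : Cardinal) :=
  stmt7_general ω hskew ζ hζ Z hmul N hN hprim S hS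
end

section
/- (De Concini–Procesi) If ζ ∈ ℂ is a root of unity, then the quantum torus T_ζ(E) is an Azumaya algebra over its center. -/
/-!
Conjugation by `Z u` multiplies `Z e` by `ζ ^ (2 * ω u e)`. As `ζ` is a root of unity, the radical
`H` of this pairing has finite index in `E`, and `Z e` is central for `e ∈ H`. Averaging the
conjugations `x ↦ Z q * x * (Z q)⁻¹` against the characters of the finite group `Q = E ⧸ H` gives
the projections `gradeProj s` onto the `Q`-graded pieces of `A`; they lie in the image of
`A ⊗ Aᵐᵒᵖ`. The piece of degree `s` is the center times `Z s.out`, so `A` is free over its center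
with basis `(Z s.out)_s`, and every center-linear `φ` equals `∑ s, (· * Z (-s.out) * φ (Z s.out)) ∘
gradeProj s`, which is in the image. A surjection between free modules of the same finite rank
over a commutative ring is bijective.
-/

open TensorProduct

/-- The natural `R`-algebra map `A ⊗[R] Aᵐᵒᵖ → End_R(A)` (here given as the underlying
`R`-linear map), sending `a ⊗ bᵒᵖ` to the endomorphism `x ↦ a * x * b`.  An `R`-algebra
`A` is Azumaya when `A` is a faithfully projective `R`-module and this map is an
isomorphism. -/
noncomputable def azumayaMap (R A : Type*) [CommRing R] [Ring A] [Algebra R A] :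
    A ⊗[R] Aᵐᵒᵖ →ₗ[R] Module.End R A :=
  TensorProduct.lift <| LinearMap.mk₂ R
    (fun a b => (LinearMap.mulRight R b.unop).comp (LinearMap.mulLeft R a))
    (by intro a a' b; ext x; simp [add_mul])
    (by intro c a b; ext x; simp [smul_mul_assoc])
    (by intro a b b'; ext x; simp [mul_add])
    (by intro c a b; ext x; simp [mul_smul_comm])

section Azumaya

variable (R A : Type*) [CommRing R] [Ring A] [Algebra R A]

theorem azumayaMap_eq_mulLeftRight :
    azumayaMap R A = (AlgHom.mulLeftRight R A).toLinearMap :=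
  TensorProduct.ext' fun a b => by ext x; simp [azumayaMap]

variable {R A}

theorem AlgHom.mulLeftRight_bijective_of_surjective [Module.Free R A] [Module.Finite R A]
    (h : Function.Surjective (AlgHom.mulLeftRight R A)) :
    Function.Bijective (AlgHom.mulLeftRight R A) := by
  refine OrzechProperty.bijective_of_surjective_of_finrank_le
    (AlgHom.mulLeftRight R A).toLinearMap h ?_
  rcases subsingleton_or_nontrivial R with hR | hR
  · simp
  · rw [Module.finrank_tensorProduct, Module.finrank_linearMap,
      (MulOpposite.opLinearEquiv R).finrank_eq.symm]

end Azumaya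

section Radical

variable {E G : Type*} [AddCommGroup E] [Group G]

theorem zpow_two_mul_apply_swap {ω : E →ₗ[ℤ] E →ₗ[ℤ] ℤ} (hskew : ∀ a b, ω a b = -ω b a) (ζ : G)
    (a b : E) : ζ ^ (2 * ω a b) = (ζ ^ (2 * ω b a))⁻¹ := by
  rw [hskew, mul_neg, zpow_neg]

def radical (ζ : G) (ω : E →ₗ[ℤ] E →ₗ[ℤ] ℤ) : AddSubgroup E where
  carrier := {e | ∀ f, ζ ^ (2 * ω e f) = 1}
  add_mem' {a b} ha hb f := by simp [mul_add, zpow_add, ha f, hb f]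
  zero_mem' f := by simp
  neg_mem' {a} ha f := by simp [ha f]

theorem mem_radical {ζ : G} {ω : E →ₗ[ℤ] E →ₗ[ℤ] ℤ} {e : E} :
    e ∈ radical ζ ω ↔ ∀ f, ζ ^ (2 * ω e f) = 1 :=
  Iff.rfl

theorem finite_quotient_radical [Module.Finite ℤ E] {ζ : G} {n : ℕ} (hn : n ≠ 0) (hζ : ζ ^ n = 1)
    (ω : E →ₗ[ℤ] E →ₗ[ℤ] ℤ) : Finite (E ⧸ radical ζ ω) := by
  have : AddGroup.FG E := Module.Finite.iff_addGroup_fg.mp ‹_›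
  refine AddCommGroup.finite_of_fg_isAddTorsion _ fun q => ?_
  induction q using QuotientAddGroup.induction_on with | H e => ?_
  refine isOfFinAddOrder_iff_nsmul_eq_zero.2 ⟨n, Nat.pos_of_ne_zero hn, ?_⟩
  rw [← QuotientAddGroup.mk_nsmul, QuotientAddGroup.eq_zero_iff]
  intro f
  rw [map_nsmul, LinearMap.smul_apply, nsmul_eq_mul, mul_left_comm, zpow_mul, zpow_natCast, hζ,
    one_zpow]

variable {K : Type*} [Field K]

def radicalChar (ζ : Kˣ) (ω : E →ₗ[ℤ] E →ₗ[ℤ] ℤ) (x : E) : AddChar (E ⧸ radical ζ ω) K :=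
  AddChar.toAddMonoidHomEquiv.symm <| QuotientAddGroup.lift (radical ζ ω)
    { toFun e := Additive.ofMul ((ζ ^ (2 * ω e x) : Kˣ) : K)
      map_zero' := by simp
      map_add' a b := by simp [mul_add, zpow_add] }
    fun e he => by
      change Additive.ofMul ((ζ ^ (2 * ω e x) : Kˣ) : K) = 0
      rw [he x, Units.val_one, ofMul_one]

theorem radicalChar_apply (ζ : Kˣ) (ω : E →ₗ[ℤ] E →ₗ[ℤ] ℤ) (x : E) (q : E ⧸ radical ζ ω) :
    radicalChar ζ ω x q = ((ζ ^ (2 * ω q.out x) : Kˣ) : K) := by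
  conv_lhs => rw [← QuotientAddGroup.out_eq' q]
  rfl

variable {ω : E →ₗ[ℤ] E →ₗ[ℤ] ℤ} {ζ : Kˣ}

theorem radicalChar_eq_zero_iff (hskew : ∀ a b, ω a b = -ω b a) {x : E} :
    radicalChar ζ ω x = 0 ↔ x ∈ radical ζ ω := by
  rw [AddChar.eq_zero_iff, QuotientAddGroup.mk_surjective.forall, mem_radical]
  refine forall_congr' fun f => ?_
  rw [show radicalChar ζ ω x f = ((ζ ^ (2 * ω f x) : Kˣ) : K) from rfl, Units.val_eq_one,
    zpow_two_mul_apply_swap hskew, inv_eq_one]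

open Classical in
theorem sum_radicalChar [Fintype (E ⧸ radical ζ ω)] (hskew : ∀ a b, ω a b = -ω b a) (x : E) :
    ∑ q, radicalChar ζ ω x q =
      if x ∈ radical ζ ω then (Fintype.card (E ⧸ radical ζ ω) : K) else 0 := by
  rw [AddChar.sum_eq_ite]
  exact if_congr (radicalChar_eq_zero_iff hskew) rfl rfl

end Radical

section Center

variable {K A ι : Type*} [Field K] [Ring A] [Algebra K A]

theorem smul_mem_center {z : A} (c : K) (hz : z ∈ Subring.center A) : c • z ∈ Subring.center A :=
  Subring.mem_center_iff.2 fun g => by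
    rw [mul_smul_comm, Subring.mem_center_iff.1 hz g, smul_mul_assoc]

theorem Module.End.map_smul_of_center (f : Module.End (Subring.center A) A) (c : K) (x : A) :
    f (c • x) = c • f x := by
  let c' : Subring.center A := ⟨algebraMap K A c, Set.algebraMap_mem_center c⟩
  have hc : ∀ y : A, c • y = c' • y := fun y => Algebra.smul_def c y
  rw [hc, map_smul, hc]

theorem Module.Basis.ext_center (Z : Module.Basis ι K A) {f g : Module.End (Subring.center A) A}
    (h : ∀ i, f (Z i) = g (Z i)) : f = g := by
  ext x
  induction Z.mem_span x using Submodule.span_induction with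
  | mem _ hy => obtain ⟨i, rfl⟩ := hy; exact h i
  | zero => simp
  | add _ _ _ _ hy hz => rw [map_add, map_add, hy, hz]
  | smul c _ _ hy => rw [f.map_smul_of_center, g.map_smul_of_center, hy]

theorem Module.Basis.mem_center_of_forall_mul_comm (Z : Module.Basis ι K A) {z : A}
    (h : ∀ i, Z i * z = z * Z i) : z ∈ Subring.center A :=
  Subring.mem_center_iff.2 fun g =>
    LinearMap.congr_fun (Z.ext (f₁ := LinearMap.mulRight K z) (f₂ := LinearMap.mulLeft K z) h) g

end Center

section QuantumTorus

variable {K E A : Type*} [Field K] [AddCommGroup E] [Ring A] [Algebra K A]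

structure IsQuantumTorus (ω : E →ₗ[ℤ] E →ₗ[ℤ] ℤ) (ζ : Kˣ) (Z : Module.Basis E K A) : Prop where
  skew : ∀ a b, ω a b = -ω b a
  one : Z 0 = 1
  mul : ∀ a b, Z a * Z b = ζ ^ ω a b • Z (a + b)

variable {ω : E →ₗ[ℤ] E →ₗ[ℤ] ℤ} {ζ : Kˣ} {Z : Module.Basis E K A}

namespace IsQuantumTorus

theorem apply_self (hT : IsQuantumTorus ω ζ Z) (a : E) : ω a a = 0 := by
  have := hT.skew a a
  omega

theorem mul_neg_self (hT : IsQuantumTorus ω ζ Z) (a : E) : Z a * Z (-a) = 1 := by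
  rw [hT.mul, map_neg, hT.apply_self, neg_zero, zpow_zero, one_smul, add_neg_cancel, hT.one]

theorem neg_mul_self (hT : IsQuantumTorus ω ζ Z) (a : E) : Z (-a) * Z a = 1 := by
  simpa using hT.mul_neg_self (-a)

theorem conj (hT : IsQuantumTorus ω ζ Z) (u e : E) :
    Z u * Z e * Z (-u) = ζ ^ (2 * ω u e) • Z e := by
  rw [hT.mul u e, smul_mul_assoc, hT.mul, smul_smul, ← zpow_add, add_neg_cancel_comm,
    map_neg, map_add, LinearMap.add_apply, hT.apply_self, hT.skew e u]
  ring_nf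

theorem mem_center (hT : IsQuantumTorus ω ζ Z) {e : E} (he : e ∈ radical ζ ω) :
    Z e ∈ Subring.center A :=
  Z.mem_center_of_forall_mul_comm fun f =>
    calc Z f * Z e = Z f * Z e * Z (-f) * Z f := by
          rw [mul_assoc _ (Z (-f)), hT.neg_mul_self, mul_one]
      _ = Z e * Z f := by rw [hT.conj, zpow_two_mul_apply_swap hT.skew, he f, inv_one, one_smul]

end IsQuantumTorus

open MulOpposite

variable (ω ζ Z) in
noncomputable def gradeProj [Fintype (E ⧸ radical ζ ω)] (s : E ⧸ radical ζ ω) :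
    Module.End (Subring.center A) A :=
  AlgHom.mulLeftRight _ A <| ∑ q : E ⧸ radical ζ ω,
    (((Fintype.card (E ⧸ radical ζ ω) : K)⁻¹ * ((ζ ^ (-(2 * ω q.out s.out)) : Kˣ) : K)) • Z q.out)
      ⊗ₜ op (Z (-q.out))

theorem gradeProj_apply [Fintype (E ⧸ radical ζ ω)] (s : E ⧸ radical ζ ω) (x : A) :
    gradeProj ω ζ Z s x = ∑ q : E ⧸ radical ζ ω,
      ((Fintype.card (E ⧸ radical ζ ω) : K)⁻¹ * ((ζ ^ (-(2 * ω q.out s.out)) : Kˣ) : K)) •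
        (Z q.out * x * Z (-q.out)) := by
  simp [gradeProj]

namespace IsQuantumTorus

variable [Fintype (E ⧸ radical ζ ω)] [CharZero K]

open Classical in
theorem gradeProj_basis (hT : IsQuantumTorus ω ζ Z) (s : E ⧸ radical ζ ω) (e : E) :
    gradeProj ω ζ Z s (Z e) = if (e : E ⧸ radical ζ ω) = s then Z e else 0 := by
  have hchar : ∀ q : E ⧸ radical ζ ω,
      ((Fintype.card (E ⧸ radical ζ ω) : K)⁻¹ * ((ζ ^ (-(2 * ω q.out s.out)) : Kˣ) : K)) *
          ((ζ ^ (2 * ω q.out e) : Kˣ) : K) =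
        (Fintype.card (E ⧸ radical ζ ω) : K)⁻¹ * radicalChar ζ ω (e - s.out) q := by
    intro q
    rw [radicalChar_apply, mul_assoc, ← Units.val_mul, ← zpow_add, map_sub, mul_sub, neg_add_eq_sub]
  simp_rw [gradeProj_apply, hT.conj, Units.smul_def, smul_smul, hchar, ← Finset.sum_smul,
    ← Finset.mul_sum, sum_radicalChar hT.skew, ← QuotientAddGroup.eq_iff_sub_mem,
    QuotientAddGroup.out_eq']
  split_ifs <;> simp

theorem sum_gradeProj (hT : IsQuantumTorus ω ζ Z) (x : A) : ∑ s, gradeProj ω ζ Z s x = x := by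
  have h : ∑ s, gradeProj ω ζ Z s = 1 := Z.ext_center fun e => by simp [hT.gradeProj_basis]
  simpa using LinearMap.congr_fun h x

theorem gradeProj_mul_neg_mem_center (hT : IsQuantumTorus ω ζ Z) (s : E ⧸ radical ζ ω) (x : A) :
    gradeProj ω ζ Z s x * Z (-s.out) ∈ Subring.center A := by
  induction Z.mem_span x using Submodule.span_induction with
  | mem _ hy =>
    obtain ⟨e, rfl⟩ := hy
    rw [hT.gradeProj_basis]
    split_ifs with he
    · rw [hT.mul, Units.smul_def]
      refine smul_mem_center _ (hT.mem_center ?_)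
      rw [← sub_eq_add_neg, ← QuotientAddGroup.eq_iff_sub_mem, he, QuotientAddGroup.out_eq']
    · rw [zero_mul]
      exact zero_mem _
  | zero => simp
  | add _ _ _ _ hy hz => rw [map_add, add_mul]; exact add_mem hy hz
  | smul c _ _ hy => rw [Module.End.map_smul_of_center, smul_mul_assoc]; exact smul_mem_center c hy

noncomputable def coord (hT : IsQuantumTorus ω ζ Z) (s : E ⧸ radical ζ ω) :
    A →ₗ[Subring.center A] Subring.center A where
  toFun x := ⟨gradeProj ω ζ Z s x * Z (-s.out), hT.gradeProj_mul_neg_mem_center s x⟩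
  map_add' x y := Subtype.ext (by simp [add_mul])
  map_smul' r x := Subtype.ext <| by
    change gradeProj ω ζ Z s (r • x) * _ = r * (gradeProj ω ζ Z s x * _)
    rw [map_smul, Subring.smul_def, smul_eq_mul, mul_assoc]

@[simp]
theorem coe_coord (hT : IsQuantumTorus ω ζ Z) (s : E ⧸ radical ζ ω) (x : A) :
    (hT.coord s x : A) = gradeProj ω ζ Z s x * Z (-s.out) :=
  rfl

theorem gradeProj_eq_coord_smul (hT : IsQuantumTorus ω ζ Z) (s : E ⧸ radical ζ ω) (x : A) :
    gradeProj ω ζ Z s x = hT.coord s x • Z s.out := by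
  rw [Subring.smul_def, smul_eq_mul, coe_coord, mul_assoc, hT.neg_mul_self, mul_one]

open Classical in
theorem coord_basis (hT : IsQuantumTorus ω ζ Z) (s q : E ⧸ radical ζ ω) :
    hT.coord s (Z q.out) = if q = s then 1 else 0 := by
  ext
  rw [coe_coord, hT.gradeProj_basis, QuotientAddGroup.out_eq']
  split_ifs with h
  · rw [h, hT.mul_neg_self, OneMemClass.coe_one]
  · simp

noncomputable def centerBasis (hT : IsQuantumTorus ω ζ Z) :
    Module.Basis (E ⧸ radical ζ ω) (Subring.center A) A :=
  .ofEquivFun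
    { toLinearMap := LinearMap.pi hT.coord
      invFun r := ∑ s, r s • Z s.out
      left_inv x := by
        change ∑ s, hT.coord s x • Z s.out = x
        simp only [← hT.gradeProj_eq_coord_smul]
        exact hT.sum_gradeProj x
      right_inv r := funext fun s => by simp [map_sum, hT.coord_basis] }

theorem mulLeftRight_surjective (hT : IsQuantumTorus ω ζ Z) :
    Function.Surjective (AlgHom.mulLeftRight (Subring.center A) A) := by
  intro φ
  suffices φ ∈ (AlgHom.mulLeftRight (Subring.center A) A).range from this
  have hφ : φ = ∑ s, LinearMap.mulRight (Subring.center A) (Z (-s.out) * φ (Z s.out)) *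
      gradeProj ω ζ Z s := by
    ext x
    conv_lhs => rw [← hT.sum_gradeProj x]
    rw [map_sum, LinearMap.sum_apply]
    refine Finset.sum_congr rfl fun s _ => ?_
    rw [Module.End.mul_apply, LinearMap.mulRight_apply, hT.gradeProj_eq_coord_smul, map_smul,
      Subring.smul_def, Subring.smul_def, smul_eq_mul, smul_eq_mul, mul_assoc,
      ← mul_assoc (Z _), hT.mul_neg_self, one_mul]
  rw [hφ]
  refine Subalgebra.sum_mem _ fun s _ => Subalgebra.mul_mem _
    ((AlgHom.mem_range _).2 ⟨1 ⊗ₜ op (Z (-s.out) * φ (Z s.out)), ?_⟩) ⟨_, rfl⟩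
  ext x
  rw [AlgHom.mulLeftRight_apply, one_mul, unop_op, LinearMap.mulRight_apply]

end IsQuantumTorus

end QuantumTorus

theorem stmt8_general {E : Type*} [AddCommGroup E] [Module.Finite ℤ E]
    (ω : E →ₗ[ℤ] E →ₗ[ℤ] ℤ) (hskew : ∀ a b : E, ω a b = - ω b a)
    {A : Type*} [Ring A] [Algebra ℂ A]
    (ζ : ℂ) (Z : Module.Basis E ℂ A) (hone : Z 0 = 1)
    (hmul : ∀ a b : E, Z a * Z b = ζ ^ (ω a b) • Z (a + b))
    (hroot : ∃ n : ℕ, 1 ≤ n ∧ ζ ^ n = 1) :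
    FaithfulSMul (Subring.center A) A ∧
    Module.Finite (Subring.center A) A ∧
    Module.Projective (Subring.center A) A ∧
    Function.Bijective (azumayaMap (Subring.center A) A) := by
  obtain ⟨n, hn_pos, hζn⟩ := hroot
  have hn : n ≠ 0 := by omega
  set u : ℂˣ := (IsUnit.of_pow_eq_one hζn hn).unit
  have hT : IsQuantumTorus ω u Z :=
    ⟨hskew, hone, fun a b => by simpa [u, Units.smul_def] using hmul a b⟩
  have : Finite (E ⧸ radical u ω) := finite_quotient_radical hn (Units.ext (by simpa [u])) ω
  let := Fintype.ofFinite (E ⧸ radical u ω)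
  have := Module.Free.of_basis hT.centerBasis
  have := Module.Finite.of_basis hT.centerBasis
  refine ⟨inferInstance, inferInstance, inferInstance, ?_⟩
  rw [azumayaMap_eq_mulLeftRight]
  exact AlgHom.mulLeftRight_bijective_of_surjective hT.mulLeftRight_surjective

/-- De Concini–Procesi: let `E` be a free `ℤ`-module of finite rank with a
skew-symmetric bilinear form `ω`, and let `T_ζ(E)` be the quantum torus: a `ℂ`-algebra
`A` with basis `(Z_e)_{e ∈ E}`, `Z_0 = 1` and `Z_a · Z_b = ζ^{ω(a,b)} Z_{a+b}`.  If `ζ`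
is a root of unity, then `T_ζ(E)` is Azumaya over its center `R`: it is a faithfully
projective `R`-module (faithful, finitely generated and projective) and the natural map
`A ⊗[R] Aᵐᵒᵖ → End_R(A)` is bijective. -/
theorem stmt8 {E : Type*} [AddCommGroup E] [Module.Free ℤ E] [Module.Finite ℤ E]
    (ω : E →ₗ[ℤ] E →ₗ[ℤ] ℤ) (hskew : ∀ a b : E, ω a b = - ω b a)
    {A : Type*} [Ring A] [Algebra ℂ A]
    (ζ : ℂ) (hζ : ζ ≠ 0) (Z : Module.Basis E ℂ A) (hone : Z 0 = 1)
    (hmul : ∀ a b : E, Z a * Z b = ζ ^ (ω a b) • Z (a + b))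
    (hroot : ∃ n : ℕ, 1 ≤ n ∧ ζ ^ n = 1) :
    FaithfulSMul (Subring.center A) A ∧
    Module.Finite (Subring.center A) A ∧
    Module.Projective (Subring.center A) A ∧
    Function.Bijective (azumayaMap (Subring.center A) A) :=
  stmt8_general ω hskew ζ Z hone hmul hroot
end

section
/- Let N be an odd positive integer, let E be a set with a distinguished element a∂, and let m : E → ℕ satisfy m(e) ≤ N − 1 for every e ∈ E. Suppose k₁, k₂ : E → ℤ satisfy, for i = 1, 2 and every e ∈ E: |kᵢ(e)| ≤ m(e), kᵢ(e) ≡ m(e) (mod 2), and kᵢ(a∂) = 0. If there exist an integer n with 0 ≤ n ≤ N − 1 and a map k₀ : E → ℤ such that k₁(e) − k₂(e) = 2n + N·k₀(e) for all e ∈ E, then n = 0, k₀ is identically zero, and k₁ = k₂. -/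
/-- the combinatorial core of the injectivity lemma for admissible states.
`E` is the set of edges, `ad` the boundary edge, `m e = |γ ∩ e| ≤ N - 1`, and `k₁, k₂`
are balanced maps of admissible states (bounded by `m`, of the same parity as `m`, and
vanishing on the boundary edge).  If `k₁ - k₂ = n·k∂ + N·k₀` (where `k∂` is the constant
map `2`) with `0 ≤ n ≤ N - 1`, then `n = 0`, `k₀ = 0` and `k₁ = k₂`. -/
theorem stmt9 {E : Type*} (N : ℕ) (hodd : Odd N) (hpos : 1 ≤ N)
    (ad : E) (m : E → ℕ) (hm : ∀ e, m e ≤ N - 1)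
    (k₁ k₂ : E → ℤ)
    (h1abs : ∀ e, |k₁ e| ≤ (m e : ℤ)) (h2abs : ∀ e, |k₂ e| ≤ (m e : ℤ))
    (h1par : ∀ e, Int.ModEq 2 (k₁ e) (m e : ℤ))
    (h2par : ∀ e, Int.ModEq 2 (k₂ e) (m e : ℤ))
    (h1bd : k₁ ad = 0) (h2bd : k₂ ad = 0)
    (n : ℤ) (hn0 : 0 ≤ n) (hn1 : n ≤ (N : ℤ) - 1)
    (k₀ : E → ℤ) (heq : ∀ e, k₁ e - k₂ e = 2 * n + (N : ℤ) * k₀ e) :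
    n = 0 ∧ (∀ e, k₀ e = 0) ∧ k₁ = k₂ := by
  have hNodd : Odd (N : ℤ) := by exact_mod_cast hodd
  have hNpos : (0 : ℤ) < N := by exact_mod_cast hpos
  -- At the boundary edge: 0 = 2n + N * k₀ ad
  have had := heq ad
  rw [h1bd, h2bd] at had
  have hdvd : (N : ℤ) ∣ 2 * n := ⟨-k₀ ad, by linarith⟩
  have hcop : IsCoprime (N : ℤ) 2 := by
    rcases hodd with ⟨j, hj⟩
    exact ⟨1, -j, by linarith⟩
  have hdvdn : (N : ℤ) ∣ n := hcop.dvd_of_dvd_mul_left hdvd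
  have hn : n = 0 := by
    rcases hdvdn with ⟨c, hc⟩
    rcases lt_trichotomy c 0 with h | h | h
    · nlinarith
    · simp [hc, h]
    · nlinarith
  subst hn
  have hk0 : ∀ e, k₀ e = 0 := by
    intro e
    have he := heq e
    simp only [mul_zero, zero_add] at he
    -- parity: k₁ e - k₂ e is even
    have heven : (2 : ℤ) ∣ (k₁ e - k₂ e) := by
      have := ((h1par e).sub (h2par e)).symm.dvd
      simpa using this
    rw [he] at heven
    have hk0even : (2 : ℤ) ∣ k₀ e := by
      rcases hodd with ⟨j, hj⟩
      have : (2 : ℤ) ∣ (2 * j + 1) * k₀ e := by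
        have : ((N : ℤ)) = 2 * j + 1 := by exact_mod_cast hj
        rwa [this] at heven
      rcases Int.prime_two.dvd_mul.1 this with h | h
      · exfalso; rcases h with ⟨c, hc⟩; omega
      · exact h
    by_contra hne
    have h2le : 2 ≤ |k₀ e| := by
      rcases hk0even with ⟨c, hc⟩
      rcases lt_trichotomy c 0 with h | h | h
      · rw [hc, abs_mul, abs_of_nonpos h.le]; simp; omega
      · exact absurd (by simp [hc, h]) hne
      · rw [hc, abs_mul, abs_of_pos h]; simp; omega
    have habs : |k₁ e - k₂ e| ≤ 2 * (m e : ℤ) :=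
      (abs_sub _ _).trans (by linarith [h1abs e, h2abs e])
    have hmN : (m e : ℤ) ≤ (N : ℤ) - 1 := by
      have := hm e; omega
    rw [he, abs_mul, abs_of_nonneg hNpos.le] at habs
    nlinarith
  refine ⟨rfl, hk0, funext fun e => ?_⟩
  have := heq e
  rw [hk0 e] at this
  linarith
end
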